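/- arXiv:2212.14661 — 2 statements merged into one kernel-verified Lean document; each statement's English description precedes it below -/
import Mathlib

section
/- If the formal power series ν satisfies ν = 1 + r(ν + 3 ν^{k+1}), then [r^n]ν = (1/n) Σ_{j=0}^{n} 3^j binomial(n, j) binomial(n+kj, n−1) for n ≥ 1. -/
open PowerSeries Finset

lemma residue_aux {Φ ν : PowerSeries ℚ} (hΦ : PowerSeries.constantCoeff Φ ≠ 0)
    (hν' : derivative ℚ ν = Φ + X * derivative ℚ Φ) (m : ℕ) :
    PowerSeries.coeff (m + 1) (Φ⁻¹ ^ (m + 2) * derivative ℚ ν) = 0 := by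
  have hvΦ : Φ⁻¹ * Φ = 1 := by rw [mul_comm]; exact PowerSeries.mul_inv_cancel Φ hΦ
  have hdv : derivative ℚ (Φ⁻¹) = -Φ⁻¹ ^ 2 * derivative ℚ Φ := derivative_inv' Φ
  have hdW : derivative ℚ (Φ⁻¹ ^ (m+1))
      = -(((m : PowerSeries ℚ)+1) * (Φ⁻¹ ^ (m+2) * derivative ℚ Φ)) := by
    rw [Derivation.leibniz_pow, hdv]
    simp only [smul_eq_mul, nsmul_eq_mul, Nat.add_sub_cancel]
    push_cast
    ring
  have key : ((m : PowerSeries ℚ)+1) * (Φ⁻¹ ^ (m+2) * derivative ℚ ν)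
      = ((m : PowerSeries ℚ)+1) * Φ⁻¹ ^ (m+1) - X * derivative ℚ (Φ⁻¹ ^ (m+1)) := by
    rw [hdW, hν']
    linear_combination (((m : PowerSeries ℚ)+1) * Φ⁻¹ ^ (m+1)) * hvΦ
  have hC : ((m : PowerSeries ℚ)+1) = PowerSeries.C ((m : ℚ)+1) := by
    rw [map_add, map_natCast, map_one]
  rw [hC] at key
  have h2 := congrArg (PowerSeries.coeff (m+1)) key
  rw [map_sub, coeff_C_mul, coeff_C_mul, coeff_succ_X_mul, coeff_derivative] at h2
  have hne : ((m : ℚ)+1) ≠ 0 := by positivity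
  have h3 : ((m:ℚ)+1) * PowerSeries.coeff (m+1) (Φ⁻¹ ^ (m+2) * derivative ℚ ν) = 0 := by
    rw [h2]; ring
  exact (mul_eq_zero.mp h3).resolve_left hne

/-- If `ν = 1 + r(ν + 3ν^{k+1})` then
`[rⁿ]ν = (1/n) Σ_{j=0}^{n} 3^j C(n,j) C(n+kj, n-1)` for `n ≥ 1`. -/
theorem typeI_weighted_coeff (k n : ℕ) (hk : 1 ≤ k) (hn : 1 ≤ n)
    (ν : PowerSeries ℚ)
    (hν : ν = 1 + PowerSeries.X * (ν + 3 * ν ^ (k + 1))) :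
    (PowerSeries.coeff n) ν
      = (1 / (n : ℚ)) * ∑ j ∈ Finset.range (n + 1),
          3 ^ j * (n.choose j : ℚ) * ((n + k * j).choose (n - 1) : ℚ) := by
  obtain ⟨n', rfl⟩ : ∃ n', n = n' + 1 := ⟨n - 1, by omega⟩
  set Φ : PowerSeries ℚ := ν + 3 * ν ^ (k + 1) with hΦdef
  -- constant coefficients
  have hc0ν : PowerSeries.constantCoeff ν = 1 := by
    have h := congrArg (PowerSeries.constantCoeff) hν
    simpa using h
  have hc0Φ : PowerSeries.constantCoeff Φ = 4 := by
    rw [hΦdef, map_add, map_mul, map_pow, hc0ν, map_ofNat]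
    norm_num
  have hΦ0 : PowerSeries.constantCoeff Φ ≠ 0 := by rw [hc0Φ]; norm_num
  have hvi : ∀ i : ℕ, Φ ^ i * Φ⁻¹ ^ i = 1 := fun i => by
    rw [← mul_pow, PowerSeries.mul_inv_cancel Φ hΦ0, one_pow]
  -- derivative identity
  have hν' : derivative ℚ ν = Φ + X * derivative ℚ Φ := by
    conv_lhs => rw [hν]
    rw [map_add, Derivation.map_one_eq_zero, Derivation.leibniz, derivative_X]
    simp only [smul_eq_mul, mul_one, zero_add]
    ring
  have hc1ν : PowerSeries.coeff 1 ν = 4 := by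
    have h := congrArg (PowerSeries.coeff (0 + 1)) hν
    rw [map_add, coeff_succ_X_mul, coeff_zero_eq_constantCoeff_apply, hc0Φ] at h
    simpa using h
  -- The polynomial P
  set P : Polynomial ℚ := (1 + Polynomial.X) + 3 * (1 + Polynomial.X) ^ (k + 1) with hPdef
  have haev : Polynomial.aeval (X * Φ) P = Φ := by
    have h1 : Polynomial.aeval (X * Φ) (1 + Polynomial.X : Polynomial ℚ) = ν := by
      rw [map_add, map_one, Polynomial.aeval_X]; exact hν.symm
    rw [hPdef, map_add, map_mul, map_pow, h1, map_ofNat]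
  -- degree bound
  set N : ℕ := (n' + 1) * (k + 1) + 1 with hN
  have h1deg : (1 + Polynomial.X : Polynomial ℚ).natDegree ≤ 1 :=
    le_trans (Polynomial.natDegree_add_le _ _) (by simp)
  have h2deg : ((1 + Polynomial.X : Polynomial ℚ) ^ (k+1)).natDegree ≤ k + 1 := by
    refine le_trans Polynomial.natDegree_pow_le ?_
    calc (k+1) * (1 + Polynomial.X : Polynomial ℚ).natDegree ≤ (k+1) * 1 :=
          Nat.mul_le_mul_left _ h1deg
      _ = k + 1 := by ring
  have h3deg : ((3 : Polynomial ℚ) * (1 + Polynomial.X) ^ (k+1)).natDegree ≤ k + 1 := by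
    refine le_trans (Polynomial.natDegree_mul_le) ?_
    simpa using h2deg
  have hdP : P.natDegree ≤ k + 1 :=
    le_trans (Polynomial.natDegree_add_le _ _) (max_le (h1deg.trans (by omega)) h3deg)
  have hdeg : (P ^ (n'+1)).natDegree < N := by
    refine lt_of_le_of_lt (le_trans Polynomial.natDegree_pow_le ?_) (Nat.lt_succ_self _)
    exact Nat.mul_le_mul_left _ hdP
  -- expansion
  have hsum : Φ ^ (n'+1) = ∑ i ∈ Finset.range N, (P ^ (n'+1)).coeff i • (X * Φ) ^ i := by
    have h := Polynomial.aeval_eq_sum_range' hdeg (X * Φ)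
    rwa [map_pow, haev] at h
  -- main coefficient extraction
  have key : PowerSeries.coeff n' (derivative ℚ ν) = (P ^ (n'+1)).coeff n' := by
    have h1 : derivative ℚ ν = ∑ i ∈ Finset.range N,
        (P ^ (n'+1)).coeff i • ((X * Φ) ^ i * (Φ⁻¹ ^ (n'+1) * derivative ℚ ν)) := by
      calc derivative ℚ ν = (Φ ^ (n'+1) * Φ⁻¹ ^ (n'+1)) * derivative ℚ ν := by
            rw [hvi, one_mul]
        _ = Φ ^ (n'+1) * (Φ⁻¹ ^ (n'+1) * derivative ℚ ν) := by ring
        _ = (∑ i ∈ Finset.range N, (P ^ (n'+1)).coeff i • (X * Φ) ^ i)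
              * (Φ⁻¹ ^ (n'+1) * derivative ℚ ν) := by rw [← hsum]
        _ = ∑ i ∈ Finset.range N,
              (P ^ (n'+1)).coeff i • ((X * Φ) ^ i * (Φ⁻¹ ^ (n'+1) * derivative ℚ ν)) := by
            rw [Finset.sum_mul]; simp [smul_mul_assoc]
    rw [h1, map_sum, Finset.sum_eq_single n']
    · -- the i = n' term
      rw [map_smul, smul_eq_mul]
      have hpow : Φ ^ n' * Φ⁻¹ ^ (n'+1) = Φ⁻¹ := by
        calc Φ ^ n' * Φ⁻¹ ^ (n'+1) = (Φ ^ n' * Φ⁻¹ ^ n') * Φ⁻¹ := by rw [pow_succ]; ring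
          _ = Φ⁻¹ := by rw [hvi, one_mul]
      have e : (X * Φ) ^ n' * (Φ⁻¹ ^ (n'+1) * derivative ℚ ν)
          = X ^ n' * (Φ⁻¹ * derivative ℚ ν) := by
        calc (X * Φ) ^ n' * (Φ⁻¹ ^ (n'+1) * derivative ℚ ν)
            = X ^ n' * ((Φ ^ n' * Φ⁻¹ ^ (n'+1)) * derivative ℚ ν) := by rw [mul_pow]; ring
          _ = X ^ n' * (Φ⁻¹ * derivative ℚ ν) := by rw [hpow]
      rw [e]
      have e2 : PowerSeries.coeff n' (X ^ n' * (Φ⁻¹ * derivative ℚ ν))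
          = PowerSeries.coeff 0 (Φ⁻¹ * derivative ℚ ν) := by
        simpa using PowerSeries.coeff_X_pow_mul (Φ⁻¹ * derivative ℚ ν) n' 0
      have e3 : PowerSeries.coeff 0 (Φ⁻¹ * derivative ℚ ν) = 1 := by
        rw [coeff_zero_eq_constantCoeff_apply, map_mul, PowerSeries.constantCoeff_inv, hc0Φ,
          ← coeff_zero_eq_constantCoeff_apply]
        norm_num [coeff_derivative, hc1ν]
      rw [e2, e3, mul_one]
    · -- other terms vanish
      intro i hi hne
      rw [map_smul, smul_eq_mul]
      rcases lt_or_gt_of_ne hne with h | h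
      · -- i < n' : residue lemma
        have hspl : (n' + 1) = i + (n' + 1 - i) := by omega
        have hΦv : Φ ^ i * Φ⁻¹ ^ (n'+1) = Φ⁻¹ ^ (n' + 1 - i) := by
          have hsp2 : Φ⁻¹ ^ (n'+1) = Φ⁻¹ ^ i * Φ⁻¹ ^ (n' + 1 - i) := by
            rw [← pow_add, ← hspl]
          calc Φ ^ i * Φ⁻¹ ^ (n'+1)
              = (Φ ^ i * Φ⁻¹ ^ i) * Φ⁻¹ ^ (n' + 1 - i) := by rw [hsp2]; ring
            _ = Φ⁻¹ ^ (n' + 1 - i) := by rw [hvi, one_mul]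
        have e : (X * Φ) ^ i * (Φ⁻¹ ^ (n'+1) * derivative ℚ ν)
            = X ^ i * (Φ⁻¹ ^ (n' + 1 - i) * derivative ℚ ν) := by
          calc (X * Φ) ^ i * (Φ⁻¹ ^ (n'+1) * derivative ℚ ν)
              = X ^ i * ((Φ ^ i * Φ⁻¹ ^ (n'+1)) * derivative ℚ ν) := by rw [mul_pow]; ring
            _ = _ := by rw [hΦv]
        rw [e, PowerSeries.coeff_X_pow_mul', if_pos (le_of_lt h)]
        have em : n' - i = (n' - i - 1) + 1 := by omega
        have em2 : n' + 1 - i = (n' - i - 1) + 2 := by omega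
        rw [em, em2, residue_aux hΦ0 hν' (n' - i - 1), mul_zero]
      · -- i > n'
        have e : (X * Φ) ^ i * (Φ⁻¹ ^ (n'+1) * derivative ℚ ν)
            = X ^ i * (Φ ^ i * (Φ⁻¹ ^ (n'+1) * derivative ℚ ν)) := by
          rw [mul_pow]; ring
        rw [e, PowerSeries.coeff_X_pow_mul', if_neg (not_le.mpr h), mul_zero]
    · intro hnmem
      have h1 : n' + 1 ≤ (n' + 1) * (k + 1) := Nat.le_mul_of_pos_right _ (by omega)
      exact absurd (Finset.mem_range.mpr (by omega)) hnmem
  -- compute the coefficient of P ^ (n'+1)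
  have hPn : (P ^ (n'+1)).coeff n' = ∑ j ∈ Finset.range (n' + 1 + 1),
      3 ^ j * ((n'+1).choose j : ℚ) * ((n' + 1 + k * j).choose n' : ℚ) := by
    have hexp : P ^ (n'+1) = ∑ j ∈ Finset.range (n' + 1 + 1),
        Polynomial.C ((3:ℚ) ^ j * ((n'+1).choose j : ℚ))
          * (1 + Polynomial.X) ^ (n' + 1 + k * j) := by
      rw [hPdef, add_comm ((1 : Polynomial ℚ) + Polynomial.X), add_pow]
      refine Finset.sum_congr rfl fun j hj => ?_
      have hj' : j ≤ n' + 1 := by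
        have := Finset.mem_range.mp hj; omega
      have hexpo : (k+1) * j + (n' + 1 - j) = n' + 1 + k * j := by
        have : (k+1) * j = k * j + j := by ring
        omega
      rw [mul_pow, ← pow_mul]
      calc (3:Polynomial ℚ) ^ j * (1 + Polynomial.X) ^ ((k+1) * j)
              * (1 + Polynomial.X) ^ (n' + 1 - j) * ((n'+1).choose j : Polynomial ℚ)
          = ((3:Polynomial ℚ) ^ j * ((n'+1).choose j : Polynomial ℚ))
              * ((1 + Polynomial.X) ^ ((k+1) * j) * (1 + Polynomial.X) ^ (n' + 1 - j)) := by
            ring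
        _ = ((3:Polynomial ℚ) ^ j * ((n'+1).choose j : Polynomial ℚ))
              * (1 + Polynomial.X) ^ (n' + 1 + k * j) := by rw [← pow_add, hexpo]
        _ = Polynomial.C ((3:ℚ) ^ j * ((n'+1).choose j : ℚ))
              * (1 + Polynomial.X) ^ (n' + 1 + k * j) := by
            rw [map_mul, map_pow, map_ofNat, Polynomial.C_eq_natCast]
    rw [hexp, Polynomial.finset_sum_coeff]
    refine Finset.sum_congr rfl fun j hj => ?_
    rw [Polynomial.coeff_C_mul, Polynomial.coeff_one_add_X_pow]
  -- assemble
  have hder := coeff_derivative ν n'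
  rw [key] at hder
  have hne : ((n' + 1 : ℕ) : ℚ) ≠ 0 := by positivity
  rw [hPn] at hder
  have hsimp : n' + 1 - 1 = n' := by omega
  rw [hsimp, hder]
  have hq : ((n' : ℚ) + 1) ≠ 0 := by positivity
  push_cast
  field_simp
end

section
/- Let G_n(m,r,s,u) be the generating function of multi-colored dimer configurations on a segment of length n, where the weight of a configuration with a connected components, b dimers, and position sum c is m^a (m−1)^{b−a} r^b s^c u^a. Then G_n satisfies the Fibonacci-type recurrence G_n(m,r,s,u) = (1 + rs(m−1)) G_{n−1}(m,rs,s,u) + rs(m(u−1)+1) G_{n−2}(m,rs²,s,u), with G_0 = G_{−1} = 1. -/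
/-- A dimer configuration on the segment `[0,n]` is recorded by which of the `n`
positions `1, …, n` carry a dimer; position `i` (for `0 ≤ i < n`) corresponds to the
edge `{v_i, v_{i+1}}`, i.e. to the dimer at position `i + 1`.  The colors and the
adjacency condition are absorbed into the weight `m^a (m-1)^{b-a}`.  This helper
extends a configuration `d : Fin n → Bool` to all of `ℕ` by `false`. -/
def dimerAt (n : ℕ) (d : Fin n → Bool) (i : ℕ) : Bool :=
  if h : i < n then d ⟨i, h⟩ else false

/-- `b`: the number of dimers of a configuration. -/
def numDimers (n : ℕ) (d : Fin n → Bool) : ℕ :=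
  ∑ i ∈ Finset.range n, if dimerAt n d i then 1 else 0

/-- `c`: the sum of the positions of the dimers (the dimer indexed by `i` sits at
position `i + 1`). -/
def posSum (n : ℕ) (d : Fin n → Bool) : ℕ :=
  ∑ i ∈ Finset.range n, if dimerAt n d i then i + 1 else 0

/-- `a`: the number of connected components, i.e. the number of dimers whose left
neighbour position carries no dimer. -/
def numComponents (n : ℕ) (d : Fin n → Bool) : ℕ :=
  ∑ i ∈ Finset.range n,
    if dimerAt n d i = true ∧ (i = 0 ∨ dimerAt n d (i - 1) = false) then 1 else 0

/-- The generating function `G_n(m,r,s,u)` of multi-colored dimer configurations: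
each configuration with `a` components, `b` dimers and position sum `c` contributes
`m^a (m-1)^{b-a} r^b s^c u^a`. -/
noncomputable def dimerGF (n : ℕ) (m r s u : ℚ) : ℚ :=
  ∑ d : Fin n → Bool,
    m ^ numComponents n d * (m - 1) ^ (numDimers n d - numComponents n d) *
      r ^ numDimers n d * s ^ posSum n d * u ^ numComponents n d

/-!
Split a configuration according to whether its first position carries a dimer. Removing an
empty first position shifts every dimer one place to the left, which replaces `r` by `rs`.
Removing an occupied first position costs `rs` times `m u` if it was a component on its own
and `m - 1` if the component continues; in the latter case what remains again starts with a
dimer. Writing `H_n` for the part of `G_{n+1}` with occupied first position, this gives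
`G_{n+1}(r) = G_n(rs) + H_n(r)` and `H_{n+1}(r) = mu·rs·G_n(rs²) + (m-1)rs·H_n(rs)`, and
eliminating `H` yields the recurrence.
-/

open Finset

lemma Fintype.sum_bool_tuple_succ {M : Type*} [AddCommMonoid M] (n : ℕ)
    (f : (Fin (n + 1) → Bool) → M) :
    ∑ d, f d
      = ∑ d : Fin n → Bool, f (Fin.cons false d)
        + ∑ d : Fin n → Bool, f (Fin.cons true d) := by
  rw [← (Fin.consEquiv fun _ => Bool).sum_comp, Fintype.sum_prod_type, Fintype.sum_bool, add_comm]
  rfl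

section Statistics

variable {n : ℕ} (b : Bool) (d : Fin n → Bool)

@[simp]
lemma dimerAt_cons_zero : dimerAt (n + 1) (Fin.cons b d) 0 = b := rfl

@[simp]
lemma dimerAt_cons_succ (i : ℕ) : dimerAt (n + 1) (Fin.cons b d) (i + 1) = dimerAt n d i := by
  unfold dimerAt
  split_ifs <;> first | omega | rfl

lemma numDimers_cons :
    numDimers (n + 1) (Fin.cons b d) = (if b then 1 else 0) + numDimers n d := by
  simp only [numDimers, sum_range_succ', dimerAt_cons_succ, dimerAt_cons_zero]
  cases b <;> simp only [Bool.false_eq_true, ↓reduceIte] <;> omega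

lemma posSum_cons :
    posSum (n + 1) (Fin.cons b d) = posSum n d + numDimers (n + 1) (Fin.cons b d) := by
  rw [numDimers_cons]
  simp only [posSum, numDimers, sum_range_succ', dimerAt_cons_succ, dimerAt_cons_zero]
  have shift : ∑ i ∈ range n, (if dimerAt n d i then i + 1 + 1 else 0)
      = ∑ i ∈ range n, (if dimerAt n d i then i + 1 else 0)
        + ∑ i ∈ range n, (if dimerAt n d i then 1 else 0) := by
    rw [← sum_add_distrib]
    exact sum_congr rfl fun i _ => by split_ifs <;> rfl
  rw [shift]
  cases b <;> simp only [Bool.false_eq_true, ↓reduceIte] <;> omega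

lemma numComponents_cons :
    numComponents (n + 1) (Fin.cons b d) + (if b && dimerAt n d 0 then 1 else 0)
      = (if b then 1 else 0) + numComponents n d := by
  cases n with
  | zero => cases b <;> rfl
  | succ k =>
    simp only [numComponents, sum_range_succ' _ (k + 1), sum_range_succ' _ k, dimerAt_cons_succ,
      dimerAt_cons_zero, Nat.add_sub_cancel]
    cases b <;> cases dimerAt (k + 1) d 0 <;> simp <;> omega

lemma numComponents_le_numDimers (n : ℕ) (d : Fin n → Bool) :
    numComponents n d ≤ numDimers n d :=
  sum_le_sum fun i _ => by split_ifs <;> simp_all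

end Statistics

def dimerWeight {R : Type*} [CommRing R] (n : ℕ) (m r s u : R) (d : Fin n → Bool) : R :=
  m ^ numComponents n d * (m - 1) ^ (numDimers n d - numComponents n d) *
    r ^ numDimers n d * s ^ posSum n d * u ^ numComponents n d

section Weight

variable {R : Type*} [CommRing R] {n : ℕ} (m r s u : R) (d : Fin n → Bool)

@[simp]
lemma dimerWeight_zero_length (d : Fin 0 → Bool) : dimerWeight 0 m r s u d = 1 := by
  simp [dimerWeight, numComponents, numDimers, posSum]

lemma dimerWeight_cons_false :
    dimerWeight (n + 1) m r s u (Fin.cons false d) = dimerWeight n m (r * s) s u d := by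
  have hc := numComponents_cons false d
  simp only [Bool.false_and, Bool.false_eq_true, ↓reduceIte, add_zero, zero_add] at hc
  simp only [dimerWeight, posSum_cons, numDimers_cons, hc, Bool.false_eq_true, ↓reduceIte,
    zero_add, pow_add, mul_pow]
  ring

lemma dimerWeight_cons_true_of_dimerAt_zero_eq_false (h : dimerAt n d 0 = false) :
    dimerWeight (n + 1) m r s u (Fin.cons true d)
      = m * u * (r * s) * dimerWeight n m (r * s) s u d := by
  have hc := numComponents_cons true d
  simp only [h, Bool.and_false, Bool.false_eq_true, ↓reduceIte, add_zero] at hc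
  simp only [dimerWeight, posSum_cons, numDimers_cons, hc, ↓reduceIte, Nat.add_sub_add_left,
    pow_add, mul_pow]
  ring

lemma dimerWeight_cons_true_of_dimerAt_zero (h : dimerAt n d 0 = true) :
    dimerWeight (n + 1) m r s u (Fin.cons true d)
      = (m - 1) * (r * s) * dimerWeight n m (r * s) s u d := by
  have hc := numComponents_cons true d
  simp only [h, Bool.and_self, ↓reduceIte, add_comm 1, Nat.add_right_cancel_iff] at hc
  have hle := numComponents_le_numDimers n d
  simp only [dimerWeight, posSum_cons, numDimers_cons, hc, ↓reduceIte,
    show 1 + numDimers n d - numComponents n d = numDimers n d - numComponents n d + 1 by omega,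
    pow_add, mul_pow]
  ring

end Weight

lemma dimerGF_eq_sum_dimerWeight (n : ℕ) (m r s u : ℚ) :
    dimerGF n m r s u = ∑ d, dimerWeight n m r s u d := rfl

noncomputable def dimerGFHead (n : ℕ) (m r s u : ℚ) : ℚ :=
  ∑ d : Fin n → Bool, dimerWeight (n + 1) m r s u (Fin.cons true d)

section GeneratingFunction

variable (n : ℕ) (m r s u : ℚ)

lemma dimerGF_zero : dimerGF 0 m r s u = 1 := by
  simp [dimerGF_eq_sum_dimerWeight]

lemma dimerGF_succ :
    dimerGF (n + 1) m r s u = dimerGF n m (r * s) s u + dimerGFHead n m r s u := by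
  simp only [dimerGF_eq_sum_dimerWeight, Fintype.sum_bool_tuple_succ, dimerWeight_cons_false,
    dimerGFHead]

lemma dimerGFHead_zero : dimerGFHead 0 m r s u = m * u * (r * s) := by
  rw [dimerGFHead, Fintype.sum_unique,
    dimerWeight_cons_true_of_dimerAt_zero_eq_false _ _ _ _ _ rfl, dimerWeight_zero_length, mul_one]

lemma dimerGFHead_succ :
    dimerGFHead (n + 1) m r s u
      = m * u * (r * s) * dimerGF n m (r * s ^ 2) s u
        + (m - 1) * (r * s) * dimerGFHead n m (r * s) s u := by
  simp only [dimerGFHead, Fintype.sum_bool_tuple_succ,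
    dimerWeight_cons_true_of_dimerAt_zero_eq_false _ _ _ _ _ (dimerAt_cons_zero _ _),
    dimerWeight_cons_true_of_dimerAt_zero _ _ _ _ _ (dimerAt_cons_zero _ _),
    dimerWeight_cons_false, ← mul_sum, dimerGF_eq_sum_dimerWeight, mul_assoc r s s, ← sq]

end GeneratingFunction

/-- The Fibonacci-type recurrence
`G_n(m,r,s,u) = (1 + rs(m-1)) G_{n-1}(m,rs,s,u) + rs(m(u-1)+1) G_{n-2}(m,rs²,s,u)`,
with the initial conditions `G_0 = G_{-1} = 1` (the `n = 1` instance below uses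
`G_{-1} = 1`), as a polynomial identity, i.e. for all values of `m, r, s, u`. -/
theorem dimerGF_fibonacci_recurrence (m r s u : ℚ) :
    dimerGF 0 m r s u = 1 ∧
    dimerGF 1 m r s u
      = (1 + r * s * (m - 1)) * dimerGF 0 m (r * s) s u + r * s * (m * (u - 1) + 1) * 1 ∧
    ∀ n : ℕ,
      dimerGF (n + 2) m r s u
        = (1 + r * s * (m - 1)) * dimerGF (n + 1) m (r * s) s u
            + r * s * (m * (u - 1) + 1) * dimerGF n m (r * s ^ 2) s u := by
  refine ⟨dimerGF_zero m r s u, ?_, fun n => ?_⟩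
  · rw [dimerGF_succ, dimerGF_zero, dimerGFHead_zero]
    ring
  · have hG := dimerGF_succ n m (r * s) s u
    rw [mul_assoc r s s, ← sq] at hG
    rw [dimerGF_succ, dimerGFHead_succ]
    linear_combination (1 - m) * (r * s) * hG
end
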